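/- arXiv:2210.07728 — 3 statements merged into one kernel-verified Lean document; each statement's English description precedes it below -/
import Mathlib

section
/- Let n ≥ 3 be an odd integer. Then n is composite or n ≡ 1 (mod 4) if and only if there exists an integer d such that both d and -d are quadratic nonresidues modulo n. -/
-- existence of a nonsquare in ZMod m for odd m ≥ 2
lemma exists_nonsquare_zmod (m : ℕ) (hm : 2 ≤ m) (hodd : Odd m) :
    ∃ u : ZMod m, ¬ IsSquare u := by
  set q := m.minFac with hq
  have hqp : q.Prime := Nat.minFac_prime (by omega)
  have hqd : q ∣ m := Nat.minFac_dvd m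
  have hq2 : q ≠ 2 := by
    intro h
    exact (Nat.not_even_iff_odd.mpr hodd) (even_iff_two_dvd.mpr (h ▸ hqd))
  haveI : Fact q.Prime := ⟨hqp⟩
  have hchar : ringChar (ZMod q) ≠ 2 := by
    rw [ZMod.ringChar_zmod_n]; exact hq2
  obtain ⟨v, hv⟩ := FiniteField.exists_nonsquare hchar
  refine ⟨(v.val : ZMod m), fun hsq => hv ?_⟩
  have h2 := hsq.map (ZMod.castHom hqd (ZMod q))
  rwa [map_natCast, ZMod.natCast_val, ZMod.cast_id] at h2

lemma transfer (n : ℕ) [NeZero n] (d : ℤ) :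
    (∃ x : ℤ, x ^ 2 ≡ d [ZMOD (n : ℤ)]) ↔ IsSquare ((d : ZMod n)) := by
  constructor
  · rintro ⟨x, hx⟩
    have h : ((x ^ 2 : ℤ) : ZMod n) = ((d : ℤ) : ZMod n) :=
      (ZMod.intCast_eq_intCast_iff _ _ _).mpr hx
    push_cast at h
    exact ⟨(x : ZMod n), by rw [← h]; ring⟩
  · rintro ⟨y, hy⟩
    obtain ⟨x, rfl⟩ := ZMod.intCast_surjective (n := n) y
    refine ⟨x, (ZMod.intCast_eq_intCast_iff _ _ _).mp ?_⟩
    push_cast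
    rw [hy]; ring

-- p is not ± a square mod n when p² ∣ n
lemma not_sq_of_sq_dvd (p n : ℕ) (hp : p.Prime) (hd : p * p ∣ n) (e : ℤ)
    (he : e = 1 ∨ e = -1) : ¬ ∃ x : ℤ, x ^ 2 ≡ e * p [ZMOD (n : ℤ)] := by
  rintro ⟨x, hx⟩
  have h1 : (n : ℤ) ∣ x ^ 2 - e * p := Int.ModEq.dvd hx.symm
  have h2 : ((p : ℤ) * p) ∣ x ^ 2 - e * p :=
    dvd_trans (by exact_mod_cast Int.natCast_dvd_natCast.mpr hd) h1
  have hpP : Prime (p : ℤ) := Nat.prime_iff_prime_int.mp hp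
  have hpx2 : (p : ℤ) ∣ x ^ 2 := by
    have h3 : (p : ℤ) ∣ x ^ 2 - e * p := dvd_trans (dvd_mul_right _ _) h2
    have h4 : (p : ℤ) ∣ e * p := Dvd.intro_left e rfl
    have := dvd_add h3 h4
    simpa using this
  have hpx : (p : ℤ) ∣ x := hpP.dvd_of_dvd_pow hpx2
  have hppx : ((p : ℤ) * p) ∣ x ^ 2 := by
    obtain ⟨c, rfl⟩ := hpx
    exact ⟨c * c, by ring⟩
  have hppp : ((p : ℤ) * p) ∣ e * p := (dvd_sub_right hppx).mp h2
  have hpp' : ((p : ℤ) * p) ∣ p := by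
    rcases he with rfl | rfl
    · simpa using hppp
    · simpa using (dvd_neg.mpr hppp)
  have hple : (p : ℤ) * p ≤ p := Int.le_of_dvd (by exact_mod_cast hp.pos) hpp'
  have h2p : 2 ≤ p := hp.two_le
  nlinarith [hp.pos]

theorem stmt0 (n : ℕ) (hn : 3 ≤ n) (hodd : Odd n) :
    (¬ n.Prime ∨ n % 4 = 1) ↔
      ∃ d : ℤ, ¬ ((n : ℤ) ∣ d) ∧
        (¬ ∃ x : ℤ, x ^ 2 ≡ d [ZMOD (n : ℤ)]) ∧
        (¬ ∃ x : ℤ, x ^ 2 ≡ -d [ZMOD (n : ℤ)]) := by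
  haveI : NeZero n := ⟨by omega⟩
  have key : (¬ n.Prime ∨ n % 4 = 1) ↔
      ∃ d : ZMod n, d ≠ 0 ∧ ¬ IsSquare d ∧ ¬ IsSquare (-d) := by
    constructor
    · intro hcase
      by_cases hnp : n.Prime
      · -- prime, so n % 4 = 1
        have h41 : n % 4 = 1 := hcase.resolve_left (not_not.mpr hnp)
        haveI : Fact n.Prime := ⟨hnp⟩
        have hneg1 : IsSquare (-1 : ZMod n) :=
          (ZMod.exists_sq_eq_neg_one_iff).mpr (by omega)
        obtain ⟨u, hu⟩ := exists_nonsquare_zmod n (by omega) hodd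
        refine ⟨u, fun h0 => hu (h0 ▸ ⟨0, by ring⟩), hu, fun hsq => hu ?_⟩
        have h : u = (-1) * (-u) := by ring
        rw [h]
        exact hneg1.mul hsq
      · -- composite case
        set p := n.minFac with hp
        have hpp : p.Prime := Nat.minFac_prime (by omega)
        haveI : Fact p.Prime := ⟨hpp⟩
        have hpd : p ∣ n := Nat.minFac_dvd n
        have hp2 : p ≠ 2 := by
          intro h
          exact (Nat.not_even_iff_odd.mpr hodd) (even_iff_two_dvd.mpr (h ▸ hpd))
        have hp3 : 3 ≤ p := by have := hpp.two_le; omega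
        have hplt : p ≠ n := by
          intro h; exact hnp (h ▸ hpp)
        by_cases hsqd : p * p ∣ n
        · refine ⟨(p : ZMod n), ?_, ?_, ?_⟩
          · rw [Ne, ZMod.natCast_eq_zero_iff]
            intro hnd
            have := Nat.dvd_antisymm hpd hnd
            exact hplt this
          · intro hs
            refine not_sq_of_sq_dvd p n hpp hsqd 1 (Or.inl rfl) ?_
            rw [transfer]
            push_cast
            simpa using hs
          · intro hs
            refine not_sq_of_sq_dvd p n hpp hsqd (-1) (Or.inr rfl) ?_
            rw [transfer]
            push_cast
            simpa using hs
        · obtain ⟨m, hm⟩ := hpd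
          have hm0 : m ≠ 0 := by rintro rfl; omega
          have hm1 : m ≠ 1 := by rintro rfl; simp at hm; exact hplt hm.symm
          have hmodd : Odd m := by
            rw [hm, Nat.odd_mul] at hodd; exact hodd.2
          have hpm : ¬ p ∣ m := by
            intro hdm
            exact hsqd (hm ▸ mul_dvd_mul_left p hdm)
          have hco : Nat.Coprime p m := (Nat.Prime.coprime_iff_not_dvd hpp).mpr hpm
          have e := (ZMod.ringEquivCongr hm).trans (ZMod.chineseRemainder hco)
          obtain ⟨u, hu⟩ := exists_nonsquare_zmod p hpp.two_le (hpp.odd_of_ne_two hp2)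
          obtain ⟨w, hw⟩ := exists_nonsquare_zmod m (by omega) hmodd
          refine ⟨e.symm (u, -w), ?_, ?_, ?_⟩
          · intro h0
            have : (u, -w) = ((0 : ZMod p), (0 : ZMod m)) := by
              have := congrArg e h0
              simpa using this
            have hu0 : u = 0 := (Prod.ext_iff.mp this).1
            exact hu (hu0 ▸ ⟨0, by ring⟩)
          · intro hs
            have h2 := hs.map (e : ZMod n →+* ZMod p × ZMod m)
            rw [RingHom.coe_coe, RingEquiv.apply_symm_apply] at h2
            obtain ⟨⟨r, s⟩, hrs⟩ := h2
            exact hu ⟨r, (Prod.ext_iff.mp hrs).1⟩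
          · intro hs
            have h2 := hs.map (e : ZMod n →+* ZMod p × ZMod m)
            rw [RingHom.coe_coe, map_neg, RingEquiv.apply_symm_apply] at h2
            obtain ⟨⟨r, s⟩, hrs⟩ := h2
            refine hw ⟨s, ?_⟩
            have := (Prod.ext_iff.mp hrs).2
            simpa using this
    · rintro ⟨d, hd0, hd, hnd⟩
      by_contra hcon
      push_neg at hcon
      obtain ⟨hprime, h41⟩ := hcon
      haveI : Fact n.Prime := ⟨hprime⟩
      have h43 : n % 4 = 3 := by
        have h2 : n % 2 = 1 := Nat.odd_iff.mp hodd
        omega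
      have hχd : quadraticChar (ZMod n) d = -1 :=
        quadraticChar_neg_one_iff_not_isSquare.mpr hd
      have hχnd : quadraticChar (ZMod n) (-d) = -1 :=
        quadraticChar_neg_one_iff_not_isSquare.mpr hnd
      have hmul : quadraticChar (ZMod n) (-1) * quadraticChar (ZMod n) d
          = quadraticChar (ZMod n) (-d) := by
        rw [← map_mul]; ring_nf
      rw [hχd, hχnd] at hmul
      have hχ1 : quadraticChar (ZMod n) (-1) = 1 := by linarith
      have hne : (-1 : ZMod n) ≠ 0 := by
        intro h
        have : (1 : ZMod n) = 0 := by simpa using (neg_eq_zero.mp h)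
        exact one_ne_zero this
      have hsq1 : IsSquare (-1 : ZMod n) :=
        (quadraticChar_one_iff_isSquare hne).mp hχ1
      have := (ZMod.exists_sq_eq_neg_one_iff).mp hsq1
      exact this h43
  rw [key]
  constructor
  · rintro ⟨d, hd0, hd, hnd⟩
    obtain ⟨k, rfl⟩ := ZMod.intCast_surjective (n := n) d
    refine ⟨k, ?_, ?_, ?_⟩
    · rw [← ZMod.intCast_zmod_eq_zero_iff_dvd]
      exact hd0
    · rw [transfer]; exact hd
    · rw [transfer]; push_cast; exact hnd
  · rintro ⟨k, hk0, hk, hnk⟩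
    refine ⟨(k : ZMod n), ?_, ?_, ?_⟩
    · rw [Ne, ZMod.intCast_zmod_eq_zero_iff_dvd]; exact hk0
    · rw [← transfer]; exact hk
    · rw [show -((k : ℤ) : ZMod n) = ((-k : ℤ) : ZMod n) by push_cast; ring, ← transfer]
      exact hnk
end

section
/- Let n ≥ 3 be an odd composite integer. Then strictly fewer than half of the nonzero residue classes modulo n are quadratic residues modulo n, and hence there exists a nonzero d in ℤ/nℤ such that both d and -d are quadratic nonresidues modulo n. -/
/-!
When 2 is a unit, a nonzero square `y = r ^ 2` has the two distinct square roots `±r`, and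
the sets of square roots of distinct nonzero squares are disjoint; hence twice the
number of nonzero squares is at most the number of nonzero elements. For odd composite `n` the
bound is strict in `ZMod n`: if `p ^ 2 ∣ n`, then `n / p` is a nonzero element with square `0`,
missed by the count; if `n = p * m` with `p`, `m` coprime and greater than 2, the Chinese
remainder theorem gives a third square root `(1, -1)` of `1`. Finally, if `d` or `-d` were a
square for every nonzero `d`, the nonzero squares and their negatives would cover all nonzero
classes, forcing the opposite inequality.
-/

open Finset

section SquaresInFiniteRing

variable {R : Type*} [Ring R]

theorem ne_neg_self_of_isUnit_two (h2 : IsUnit (2 : R)) {x : R} (hx : x ≠ 0) : x ≠ -x := by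
  intro h
  refine hx (h2.mul_left_cancel ?_)
  rw [mul_zero, two_mul]
  nth_rewrite 2 [h]
  exact add_neg_cancel x

variable [Fintype R] [DecidableEq R]

variable (R) in
def nonzeroSquares : Finset R := {y | y ≠ 0 ∧ ∃ x : R, x ^ 2 = y}

theorem filter_sq_ne_zero_subset :
    ({x : R | x ^ 2 ≠ 0} : Finset R) ⊆ ({x : R | x ≠ 0} : Finset R) :=
  monotone_filter_right _ fun x _ hx h0 => hx (by simp [h0])

theorem card_sq_ne_zero_eq_sum_card_sq_eq :
    #{x : R | x ^ 2 ≠ 0} = ∑ y ∈ nonzeroSquares R, #{x : R | x ^ 2 = y} := by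
  rw [card_eq_sum_card_fiberwise (f := (· ^ 2)) (t := nonzeroSquares R)]
  · refine sum_congr rfl fun y hy => congrArg card ?_
    rw [filter_filter]
    refine filter_congr fun x _ => ⟨And.right, fun hx => ⟨?_, hx⟩⟩
    simp only [nonzeroSquares, mem_filter] at hy
    exact hx ▸ hy.2.1
  · intro x hx
    simp only [coe_filter, mem_univ, true_and, Set.mem_ofPred_eq, nonzeroSquares] at hx ⊢
    exact ⟨hx, x, rfl⟩

theorem two_le_card_sq_eq (h2 : IsUnit (2 : R)) {y : R} (hy : y ∈ nonzeroSquares R) :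
    2 ≤ #{x : R | x ^ 2 = y} := by
  simp only [nonzeroSquares, mem_filter] at hy
  obtain ⟨-, hy0, r, rfl⟩ := hy
  have hr : r ≠ 0 := by rintro rfl; simp at hy0
  calc 2 = #{r, -r} := (card_pair (ne_neg_self_of_isUnit_two h2 hr)).symm
    _ ≤ _ := card_le_card (by simp [insert_subset_iff])

theorem three_le_card_sq_eq_one (h2 : IsUnit (2 : R)) {w : R} (hw1 : w ≠ 1) (hw : w ≠ -1)
    (hsq : w ^ 2 = 1) : 3 ≤ #{x : R | x ^ 2 = 1} := by
  have : Nontrivial R := nontrivial_of_ne w 1 hw1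
  have h1 : (1 : R) ≠ -1 := ne_neg_self_of_isUnit_two h2 one_ne_zero
  calc 3 = #{1, -1, w} := (card_eq_three.2 ⟨1, -1, w, h1, hw1.symm, hw.symm, rfl⟩).symm
    _ ≤ _ := card_le_card (by simp [insert_subset_iff, hsq])

theorem two_mul_card_nonzeroSquares_le (h2 : IsUnit (2 : R)) :
    2 * #(nonzeroSquares R) ≤ #{x : R | x ^ 2 ≠ 0} := by
  rw [card_sq_ne_zero_eq_sum_card_sq_eq, mul_comm, ← smul_eq_mul]
  exact card_nsmul_le_sum _ _ _ fun y hy => two_le_card_sq_eq h2 hy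

theorem two_mul_card_nonzeroSquares_lt_of_sq_eq_one (h2 : IsUnit (2 : R)) {w : R}
    (hw1 : w ≠ 1) (hw : w ≠ -1) (hsq : w ^ 2 = 1) :
    2 * #(nonzeroSquares R) < #{x : R | x ^ 2 ≠ 0} := by
  have : Nontrivial R := nontrivial_of_ne w 1 hw1
  rw [card_sq_ne_zero_eq_sum_card_sq_eq, mul_comm, ← smul_eq_mul, ← sum_const]
  refine sum_lt_sum (fun y hy => two_le_card_sq_eq h2 hy) ⟨1, ?_, ?_⟩
  · simpa [nonzeroSquares] using ⟨1, one_pow 2⟩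
  · exact three_le_card_sq_eq_one h2 hw1 hw hsq

theorem card_sq_ne_zero_lt_of_sq_eq_zero {w : R} (hw0 : w ≠ 0) (hw : w ^ 2 = 0) :
    #{x : R | x ^ 2 ≠ 0} < #{x : R | x ≠ 0} := by
  refine card_lt_card ⟨filter_sq_ne_zero_subset, ?_⟩
  intro h
  simpa [hw] using h (mem_filter.2 ⟨mem_univ w, hw0⟩)

theorem two_mul_card_nonzeroSquares_lt (h2 : IsUnit (2 : R))
    (h : (∃ w : R, w ≠ 0 ∧ w ^ 2 = 0) ∨ ∃ w : R, w ≠ 1 ∧ w ≠ -1 ∧ w ^ 2 = 1) :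
    2 * #(nonzeroSquares R) < #{x : R | x ≠ 0} := by
  rcases h with ⟨w, hw0, hw⟩ | ⟨w, hw1, hw, hsq⟩
  · exact (two_mul_card_nonzeroSquares_le h2).trans_lt
      (card_sq_ne_zero_lt_of_sq_eq_zero hw0 hw)
  · refine (two_mul_card_nonzeroSquares_lt_of_sq_eq_one h2 hw1 hw hsq).trans_le ?_
    exact card_le_card filter_sq_ne_zero_subset

theorem exists_ne_zero_not_square_of_two_mul_card_nonzeroSquares_lt
    (h : 2 * #(nonzeroSquares R) < #{x : R | x ≠ 0}) :
    ∃ d : R, d ≠ 0 ∧ (¬ ∃ x : R, x ^ 2 = d) ∧ ¬ ∃ x : R, x ^ 2 = -d := by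
  by_contra! hcon
  have hcover : ({x : R | x ≠ 0} : Finset R) ⊆
      nonzeroSquares R ∪ (nonzeroSquares R).map (Equiv.neg R).toEmbedding := by
    intro d hd
    simp only [mem_filter, mem_univ, true_and] at hd
    by_cases hsq : ∃ x : R, x ^ 2 = d
    · exact mem_union_left _ (by simp [nonzeroSquares, hd, hsq])
    · refine mem_union_right _ (mem_map_equiv.2 ?_)
      simpa [nonzeroSquares, hd] using hcon d hd (fun x hx => hsq ⟨x, hx⟩)
  have := (card_le_card hcover).trans (card_union_le _ _)
  rw [card_map] at this
  omega

end SquaresInFiniteRing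

namespace ZMod

theorem isUnit_two_of_odd {n : ℕ} (hn : Odd n) : IsUnit (2 : ZMod n) := by
  simpa using (unitOfCoprime 2 (Nat.coprime_two_left.2 hn)).isUnit

theorem card_filter_ne_zero (n : ℕ) [NeZero n] : #{x : ZMod n | x ≠ 0} = n - 1 := by
  rw [filter_ne', card_erase_of_mem (mem_univ _), card_univ, card]

theorem exists_ne_zero_sq_eq_zero_of_not_squarefree {n : ℕ} (hn : n ≠ 0)
    (h : ¬ Squarefree n) : ∃ w : ZMod n, w ≠ 0 ∧ w ^ 2 = 0 := by
  obtain ⟨p, hp, k, rfl⟩ : ∃ p, p.Prime ∧ p * p ∣ n := by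
    simpa [Nat.squarefree_iff_prime_squarefree] using h
  have hk : 0 < k := Nat.pos_of_ne_zero (right_ne_zero_of_mul hn)
  refine ⟨(p * k : ℕ), ?_, ?_⟩
  · rw [Ne, natCast_eq_zero_iff]
    intro hdvd
    have hpk := Nat.mul_pos hp.pos hk
    nlinarith [hp.two_le, Nat.le_of_dvd hpk hdvd]
  · rw [← Nat.cast_pow, natCast_eq_zero_iff]
    exact ⟨k, by ring⟩

theorem exists_sq_eq_one_ne_one_ne_neg_one {a b : ℕ} (hab : a.Coprime b) (ha : 2 < a)
    (hb : 2 < b) : ∃ w : ZMod (a * b), w ≠ 1 ∧ w ≠ -1 ∧ w ^ 2 = 1 := by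
  have : Fact (2 < a) := ⟨ha⟩
  have : Fact (2 < b) := ⟨hb⟩
  let e := chineseRemainder hab
  refine ⟨e.symm (1, -1), ?_, ?_, ?_⟩
  · rw [Ne, e.symm_apply_eq, map_one]
    exact fun h => neg_one_ne_one (congrArg Prod.snd h)
  · rw [Ne, e.symm_apply_eq, map_neg, map_one]
    exact fun h => neg_one_ne_one (congrArg Prod.fst h).symm
  · rw [← map_pow, e.symm_apply_eq, map_one, Prod.pow_def, one_pow, neg_one_sq,
      Prod.mk_one_one]

theorem exists_sq_eq_one_ne_one_ne_neg_one_of_squarefree {n : ℕ} (h1 : n ≠ 1) (hodd : Odd n)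
    (hcomp : ¬ n.Prime) (h : Squarefree n) :
    ∃ w : ZMod n, w ≠ 1 ∧ w ≠ -1 ∧ w ^ 2 = 1 := by
  set p := n.minFac
  have hp : p.Prime := Nat.minFac_prime h1
  have hpn : p * (n / p) = n := Nat.mul_div_cancel' n.minFac_dvd
  have hp2 : 2 < p := by
    refine lt_of_le_of_ne hp.two_le fun h2 => Nat.not_even_iff_odd.2 hodd ?_
    exact even_iff_two_dvd.2 (h2 ▸ n.minFac_dvd)
  have hq2 : 2 < n / p := by
    obtain ⟨j, hj⟩ : Odd (n / p) := hodd.of_dvd_nat (Nat.div_dvd_of_dvd n.minFac_dvd)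
    have hq1 : n / p ≠ 1 := fun hq => hcomp (by rw [← hpn, hq, mul_one]; exact hp)
    omega
  have := exists_sq_eq_one_ne_one_ne_neg_one (Nat.coprime_of_squarefree_mul (hpn.symm ▸ h))
    hp2 hq2
  rwa [hpn] at this

theorem exists_sq_eq_zero_or_sq_eq_one_of_odd_not_prime {n : ℕ} (h1 : n ≠ 1) (hodd : Odd n)
    (hcomp : ¬ n.Prime) :
    (∃ w : ZMod n, w ≠ 0 ∧ w ^ 2 = 0) ∨
      ∃ w : ZMod n, w ≠ 1 ∧ w ≠ -1 ∧ w ^ 2 = 1 := by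
  by_cases h : Squarefree n
  · exact .inr (exists_sq_eq_one_ne_one_ne_neg_one_of_squarefree h1 hodd hcomp h)
  · exact .inl (exists_ne_zero_sq_eq_zero_of_not_squarefree hodd.pos.ne' h)

end ZMod

theorem stmt5 (n : ℕ) (hn : 3 ≤ n) (hodd : Odd n) (hcomp : ¬ n.Prime) [NeZero n] :
    2 * (Finset.univ.filter (fun y : ZMod n => y ≠ 0 ∧ ∃ x : ZMod n, x ^ 2 = y)).card
      < n - 1 ∧
    ∃ d : ZMod n, d ≠ 0 ∧ (¬ ∃ x : ZMod n, x ^ 2 = d) ∧ (¬ ∃ x : ZMod n, x ^ 2 = -d) := by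
  have hlt : 2 * #(nonzeroSquares (ZMod n)) < #{x : ZMod n | x ≠ 0} :=
    two_mul_card_nonzeroSquares_lt (ZMod.isUnit_two_of_odd hodd)
      (ZMod.exists_sq_eq_zero_or_sq_eq_one_of_odd_not_prime (by omega) hodd hcomp)
  refine ⟨?_, exists_ne_zero_not_square_of_two_mul_card_nonzeroSquares_lt hlt⟩
  rwa [ZMod.card_filter_ne_zero] at hlt
end

section
/- Let N ≥ 3 be an odd integer such that there exists an integer d with both d and -d quadratic nonresidues modulo N. Suppose D is an integer satisfying D = |aN - b²| for some integers a, b. Then D is not congruent to |d| modulo N and D is not congruent to -|d| modulo N. -/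
theorem stmt9 (N : ℤ) (hN : 3 ≤ N) (hodd : Odd N) (d : ℤ)
    (hd : ¬ ∃ x : ℤ, x ^ 2 ≡ d [ZMOD N]) (hd' : ¬ ∃ x : ℤ, x ^ 2 ≡ -d [ZMOD N])
    (D a b : ℤ) (hD : D = |a * N - b ^ 2|) :
    ¬ (D ≡ |d| [ZMOD N]) ∧ ¬ (D ≡ -|d| [ZMOD N]) := by
  have hb : (a * N - b ^ 2 : ℤ) ≡ -b ^ 2 [ZMOD N] := by
    have : (a * N : ℤ) ≡ 0 [ZMOD N] := (Int.modEq_zero_iff_dvd).mpr ⟨a, mul_comm _ _⟩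
    simpa using this.sub (Int.ModEq.refl (b ^ 2))
  have hmod : D ≡ b ^ 2 [ZMOD N] ∨ D ≡ -b ^ 2 [ZMOD N] := by
    rcases abs_cases (a * N - b ^ 2) with ⟨h, _⟩ | ⟨h, _⟩
    · right; rw [hD, h]; exact hb
    · left; rw [hD, h]; simpa using hb.neg
  have key : ∀ e : ℤ, D ≡ e [ZMOD N] → ∃ x : ℤ, x ^ 2 ≡ e [ZMOD N] ∨ x ^ 2 ≡ -e [ZMOD N] := by
    intro e he
    rcases hmod with h | h
    · exact ⟨b, Or.inl (h.symm.trans he)⟩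
    · refine ⟨b, Or.inr ?_⟩
      have := (h.symm.trans he).neg
      simpa using this
  constructor
  · intro hcon
    rcases key _ hcon with ⟨x, hx | hx⟩
    · rcases abs_cases d with ⟨h, _⟩ | ⟨h, _⟩
      · exact hd ⟨x, by rwa [h] at hx⟩
      · exact hd' ⟨x, by rwa [h] at hx⟩
    · rcases abs_cases d with ⟨h, _⟩ | ⟨h, _⟩
      · exact hd' ⟨x, by rwa [h] at hx⟩
      · exact hd ⟨x, by rw [h] at hx; simpa using hx⟩
  · intro hcon
    rcases key _ hcon with ⟨x, hx | hx⟩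
    · rcases abs_cases d with ⟨h, _⟩ | ⟨h, _⟩
      · exact hd' ⟨x, by rwa [h] at hx⟩
      · exact hd ⟨x, by rw [h] at hx; simpa using hx⟩
    · rcases abs_cases d with ⟨h, _⟩ | ⟨h, _⟩
      · exact hd ⟨x, by rw [h] at hx; simpa using hx⟩
      · exact hd' ⟨x, by rw [h] at hx; simpa using hx⟩
end
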